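/- arXiv:1412.3976 — 3 statements merged into one kernel-verified Lean document; each statement's English description precedes it below -/
import Mathlib

section
/- Let G be a simple graph and C, C' cliques of G with |C| = |C'| = k. If there exists a TAR(k)-sequence from C to C', then there exists a TS-sequence from C to C'. Moreover the minimum length of a TS-sequence from C to C' equals half the minimum length of a TAR(k)-sequence from C to C'. -/
/-!
A token slide `v ↦ w` between cliques is simulated by two TAR steps (add `w`, then remove `v`;
the intermediate set is a clique because `w` is adjacent to `v` and to the rest), so the TAR(k)
distance is at most twice the TS distance.

Conversely, along a TAR(k)-sequence `f` of length `m` starting at a `k`-clique, every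
`k`-subset of `f i` is TS-reachable from `f 0` within `(i + #(f i) - k) / 2` slides. A removal
shrinks `f i` and leaves the bound unchanged. After adding `v`, a `k`-subset through `v` is one
slide (onto `v`, from a vertex of `f i` outside it) away from a `k`-subset of `f i`, and the
bound has grown by one. At `i = m`, where `f m` is itself a `k`-clique, this gives a
TS-sequence of length at most `m / 2`.
-/

variable {V : Type*} [DecidableEq V]

/-- One TAR step: add or remove a single vertex. -/
def TARStep (C C' : Finset V) : Prop :=
  (∃ v ∉ C, C' = insert v C) ∨ (∃ v ∈ C, C' = C.erase v)

/-- A TAR(k)-sequence of cliques of `G` of length `ℓ`, given by `f` on indices `0..ℓ`. -/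
def TARSeq (G : SimpleGraph V) (k ℓ : ℕ) (f : ℕ → Finset V) : Prop :=
  (∀ i ≤ ℓ, G.IsClique (f i : Set V) ∧ k ≤ (f i).card) ∧
  ∀ i < ℓ, TARStep (f i) (f (i + 1))

/-- One TS step: slide a token along an edge. -/
def TSStep (G : SimpleGraph V) (C C' : Finset V) : Prop :=
  ∃ v ∈ C, ∃ w, w ∉ C ∧ G.Adj v w ∧ C' = insert w (C.erase v)

/-- A TS-sequence of cliques of `G` of length `ℓ`. -/
def TSSeq (G : SimpleGraph V) (ℓ : ℕ) (f : ℕ → Finset V) : Prop :=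
  (∀ i ≤ ℓ, G.IsClique (f i : Set V)) ∧ ∀ i < ℓ, TSStep G (f i) (f (i + 1))

/-- `TSSeq` and `TARSeq` both unfold to instances of this. -/
def StepSeq {α : Type*} (P : α → Prop) (R : α → α → Prop) (ℓ : ℕ) (f : ℕ → α) : Prop :=
  (∀ i ≤ ℓ, P (f i)) ∧ ∀ i < ℓ, R (f i) (f (i + 1))

theorem StepSeq.snoc {α : Type*} {P : α → Prop} {R : α → α → Prop} {ℓ : ℕ} {f : ℕ → α} {x : α}
    (h : StepSeq P R ℓ f) (hx : P x) (hR : R (f ℓ) x) :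
    StepSeq P R (ℓ + 1) (fun i => if i ≤ ℓ then f i else x) := by
  refine ⟨fun i hi => ?_, fun i hi => ?_⟩
  · dsimp only
    split_ifs with hiℓ
    exacts [h.1 i hiℓ, hx]
  · rcases Nat.lt_succ_iff_lt_or_eq.1 hi with hi | rfl
    · simpa [hi.le, Nat.succ_le_of_lt hi] using h.2 i hi
    · simpa using hR

def TSReachable (G : SimpleGraph V) (ℓ : ℕ) (S T : Finset V) : Prop :=
  ∃ f : ℕ → Finset V, TSSeq G ℓ f ∧ f 0 = S ∧ f ℓ = T

def TARReachable (G : SimpleGraph V) (k ℓ : ℕ) (S T : Finset V) : Prop :=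
  ∃ f : ℕ → Finset V, TARSeq G k ℓ f ∧ f 0 = S ∧ f ℓ = T

variable {G : SimpleGraph V} {k ℓ : ℕ} {S A B : Finset V}

theorem TSReachable.refl (hS : G.IsClique (S : Set V)) : TSReachable G 0 S S :=
  ⟨fun _ => S, ⟨fun _ _ => hS, fun i hi => absurd hi (Nat.not_lt_zero i)⟩, rfl, rfl⟩

theorem TARReachable.refl (hS : G.IsClique (S : Set V)) (hkS : k ≤ S.card) :
    TARReachable G k 0 S S :=
  ⟨fun _ => S, ⟨fun _ _ => ⟨hS, hkS⟩, fun i hi => absurd hi (Nat.not_lt_zero i)⟩, rfl, rfl⟩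

theorem TSReachable.tail (h : TSReachable G ℓ S A) (hB : G.IsClique (B : Set V))
    (hAB : TSStep G A B) : TSReachable G (ℓ + 1) S B := by
  obtain ⟨f, hf, rfl, rfl⟩ := h
  exact ⟨_, StepSeq.snoc (P := fun C : Finset V => G.IsClique (C : Set V)) hf hB hAB,
    by simp, by simp⟩

theorem TARReachable.tail (h : TARReachable G k ℓ S A) (hB : G.IsClique (B : Set V))
    (hkB : k ≤ B.card) (hAB : TARStep A B) : TARReachable G k (ℓ + 1) S B := by
  obtain ⟨f, hf, rfl, rfl⟩ := h
  exact ⟨_, StepSeq.snoc (P := fun C : Finset V => G.IsClique (C : Set V) ∧ k ≤ C.card) hf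
    ⟨hB, hkB⟩ hAB, by simp, by simp⟩

theorem TSStep.card_eq (h : TSStep G A B) : B.card = A.card := by
  obtain ⟨v, hv, w, hw, -, rfl⟩ := h
  rw [Finset.card_insert_of_notMem fun hw' => hw (Finset.mem_of_mem_erase hw'),
    Finset.card_erase_add_one hv]

theorem TSSeq.card_eq {f : ℕ → Finset V} (h : TSSeq G ℓ f) {i : ℕ} (hi : i ≤ ℓ) :
    (f i).card = (f 0).card := by
  induction i with
  | zero => rfl
  | succ i ih => rw [(h.2 i hi).card_eq, ih (by omega)]

theorem TARReachable.tsStep (h : TARReachable G k ℓ S A) (hA : G.IsClique (A : Set V))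
    (hB : G.IsClique (B : Set V)) (hkA : k ≤ A.card) (hAB : TSStep G A B) :
    TARReachable G k (ℓ + 2) S B := by
  obtain ⟨v, hv, w, hw, hvw, rfl⟩ := hAB
  have hwB : w ∈ insert w (A.erase v) := Finset.mem_insert_self w _
  have hAw : G.IsClique ((insert w A : Finset V) : Set V) := by
    rw [Finset.coe_insert]
    refine hA.insert fun b hb hbw => ?_
    by_cases hbv : b = v
    · exact hbv ▸ hvw.symm
    · exact hB hwB (Finset.mem_insert_of_mem (Finset.mem_erase.2 ⟨hbv, hb⟩)) hbw
  have hadd := h.tail hAw (by rw [Finset.card_insert_of_notMem hw]; omega) (Or.inl ⟨w, hw, rfl⟩)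
  have hwv : w ≠ v := fun hwv => hw (hwv ▸ hv)
  refine hadd.tail hB ?_ (Or.inr ⟨v, Finset.mem_insert_of_mem hv, ?_⟩)
  · rw [Finset.card_insert_of_notMem fun hw' => hw (Finset.mem_of_mem_erase hw'),
      Finset.card_erase_add_one hv]
    exact hkA
  · exact (Finset.erase_insert_of_ne hwv).symm

theorem TSReachable.tarReachable (h : TSReachable G ℓ S B) (hk : S.card = k) :
    TARReachable G k (2 * ℓ) S B := by
  obtain ⟨f, h, rfl, rfl⟩ := h
  suffices ∀ j ≤ ℓ, TARReachable G k (2 * j) (f 0) (f j) from this ℓ le_rfl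
  intro j hj
  induction j with
  | zero => exact TARReachable.refl (h.1 0 hj) hk.ge
  | succ j ih =>
    exact (ih (by omega)).tsStep (h.1 j (by omega)) (h.1 (j + 1) hj)
      ((h.card_eq (by omega)).trans hk).ge (h.2 j hj)

theorem exists_subset_tsStep_of_subset_insert {K T : Finset V} {v : V}
    (hK : G.IsClique ((insert v K : Finset V) : Set V)) (hvK : v ∉ K) (hT : T ⊆ insert v K)
    (hvT : v ∈ T) (hTK : T.card ≤ K.card) : ∃ T' ⊆ K, T'.card = T.card ∧ TSStep G T' T := by
  have hcard : (T.erase v).card < K.card := by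
    rw [Finset.card_erase_of_mem hvT]
    have := Finset.card_pos.2 ⟨v, hvT⟩
    omega
  obtain ⟨x, hxK, hxT⟩ := Finset.exists_mem_notMem_of_card_lt_card hcard
  have hxv : x ≠ v := fun hxv => hvK (hxv ▸ hxK)
  refine ⟨insert x (T.erase v), Finset.insert_subset hxK (Finset.subset_insert_iff.1 hT), ?_,
    x, Finset.mem_insert_self x _, v, ?_, ?_, ?_⟩
  · rw [Finset.card_insert_of_notMem hxT, Finset.card_erase_add_one hvT]
  · simp [hxv.symm]
  · exact hK (Finset.mem_insert_of_mem hxK) (Finset.mem_insert_self v K) hxv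
  · rw [Finset.erase_insert hxT, Finset.insert_erase hvT]

theorem TARSeq.exists_tsReachable {m : ℕ} {f : ℕ → Finset V} (h : TARSeq G k m f)
    (h0 : (f 0).card = k) {i : ℕ} (hi : i ≤ m) {T : Finset V} (hT : T ⊆ f i)
    (hTk : T.card = k) : ∃ ℓ, 2 * ℓ + k ≤ i + (f i).card ∧ TSReachable G ℓ (f 0) T := by
  induction i generalizing T with
  | zero =>
    obtain rfl := Finset.eq_of_subset_of_card_le hT (by rw [h0, hTk])
    exact ⟨0, by omega, TSReachable.refl (h.1 0 hi).1⟩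
  | succ i ih =>
    have hTclique : G.IsClique (T : Set V) := (h.1 (i + 1) hi).1.subset hT
    rcases h.2 i hi with ⟨v, hv, hfi⟩ | ⟨u, hu, hfi⟩
    · have hcard : (f (i + 1)).card = (f i).card + 1 := by rw [hfi, Finset.card_insert_of_notMem hv]
      rw [hfi] at hT
      by_cases hvT : v ∈ T
      · obtain ⟨T', hT', hT'k, hstep⟩ := exists_subset_tsStep_of_subset_insert
          (hfi ▸ (h.1 (i + 1) hi).1) hv hT hvT (hTk ▸ (h.1 i (by omega)).2)
        obtain ⟨ℓ, hℓ, hreach⟩ := ih (by omega) hT' (hT'k.trans hTk)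
        exact ⟨ℓ + 1, by omega, hreach.tail hTclique hstep⟩
      · obtain ⟨ℓ, hℓ, hreach⟩ := ih (by omega) ((Finset.subset_insert_iff_of_notMem hvT).1 hT) hTk
        exact ⟨ℓ, by omega, hreach⟩
    · have hcard : (f (i + 1)).card + 1 = (f i).card := by rw [hfi, Finset.card_erase_add_one hu]
      obtain ⟨ℓ, hℓ, hreach⟩ := ih (by omega) (hT.trans (hfi ▸ Finset.erase_subset u (f i))) hTk
      exact ⟨ℓ, by omega, hreach⟩

theorem TARReachable.exists_tsReachable {m : ℕ} (h : TARReachable G k m S B) (hS : S.card = k)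
    (hB : B.card = k) : ∃ ℓ, 2 * ℓ ≤ m ∧ TSReachable G ℓ S B := by
  obtain ⟨f, hf, rfl, rfl⟩ := h
  obtain ⟨ℓ, hℓ, hreach⟩ := hf.exists_tsReachable hS le_rfl subset_rfl hB
  exact ⟨ℓ, by omega, hreach⟩

theorem stmt4 (G : SimpleGraph V) (C C' : Finset V) (k : ℕ)
    (hC : C.card = k) (hC' : C'.card = k) :
    ((∃ (ℓ : ℕ) (f : ℕ → Finset V), TARSeq G k ℓ f ∧ f 0 = C ∧ f ℓ = C') →
      ∃ (ℓ : ℕ) (f : ℕ → Finset V), TSSeq G ℓ f ∧ f 0 = C ∧ f ℓ = C') ∧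
    (∀ dts dtar : ℕ,
      IsLeast {ℓ | ∃ f : ℕ → Finset V, TSSeq G ℓ f ∧ f 0 = C ∧ f ℓ = C'} dts →
      IsLeast {ℓ | ∃ f : ℕ → Finset V, TARSeq G k ℓ f ∧ f 0 = C ∧ f ℓ = C'} dtar →
      2 * dts = dtar) := by
  refine ⟨fun ⟨m, htar⟩ => ?_, fun dts dtar hts htar => ?_⟩
  · obtain ⟨ℓ, -, hreach⟩ := TARReachable.exists_tsReachable htar hC hC'
    exact ⟨ℓ, hreach⟩
  · obtain ⟨ℓ, hℓ, hreach⟩ := TARReachable.exists_tsReachable htar.1 hC hC'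
    have hts_le : dts ≤ ℓ := hts.2 hreach
    have htar_le : dtar ≤ 2 * dts := htar.2 (TSReachable.tarReachable hts.1 hC)
    omega
end

section
/- Let G be a chordal graph and let C_0, C_1, ..., C_ℓ be a shortest TAR(k)-sequence of cliques in G. If a vertex v belongs to both C_p and C_q for indices p < q, then v belongs to C_i for every i with p ≤ i ≤ q. -/
variable {V : Type*} [DecidableEq V]

/-- `G` is chordal: it has no induced cycle of length at least four. -/
def IsChordal (G : SimpleGraph V) : Prop :=
  ∀ n, 4 ≤ n → ∀ f : Fin n → V, Function.Injective f →
    ¬ (∀ i j : Fin n, G.Adj (f i) (f j) ↔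
        ((i.val + 1) % n = j.val ∨ (j.val + 1) % n = i.val))

/-!
Suppose `v ∈ C_a`, `v ∈ C_{b+1}` and `v` is absent in between. Since `v` is adjacent to everything
in `C_a` and `C_{b+1}`, the cliques `C_{a+1}` and `C_b` lie in `N(v)`. If all of `C_{a+1}, …, C_b`
do, putting `v` back into each of them reaches `C_{b+1}` from `C_a` in two fewer steps.
Otherwise some stretch `C_t, …, C_u` with `C_t, C_u ⊆ N(v)` leaves `N(v)` strictly in between.
Then chordality makes `C_t ∪ C_u` a clique: non-adjacent `x ∈ C_t`, `y ∈ C_u` would be joined by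
a walk through non-neighbours of `v` picked up along the stretch, and a shortest such walk closes
with `v` into an induced cycle of length at least four. Inside the clique `C_t ∪ C_u`, `C_t` turns
into `C_u` in `|C_t ∆ C_u|` steps, fewer than `u - t`, because the first step of the stretch adds a
non-neighbour of `v` that has to be removed again.
-/

open Finset SimpleGraph
open scoped symmDiff

section Chordal

omit [DecidableEq V]

variable {G : SimpleGraph V}

theorem SimpleGraph.Walk.adj_getVert_iff_of_length_eq_dist {u w : V} (p : G.Walk u w)
    (hp : p.length = G.dist u w) {i j : ℕ} (hi : i ≤ p.length) (hj : j ≤ p.length) :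
    G.Adj (p.getVert i) (p.getVert j) ↔ i + 1 = j ∨ j + 1 = i := by
  constructor
  · intro hadj
    rcases lt_trichotomy i j with h | rfl | h
    · have := G.dist_le (((p.take i).concat hadj).append (p.drop j))
      simp only [Walk.length_append, Walk.length_concat, Walk.take_length, Walk.drop_length] at this
      omega
    · exact absurd hadj (G.irrefl)
    · have := G.dist_le (((p.take j).concat hadj.symm).append (p.drop i))
      simp only [Walk.length_append, Walk.length_concat, Walk.take_length, Walk.drop_length] at this
      omega
  · rintro (rfl | rfl)
    · exact p.adj_getVert_succ (by omega)
    · exact (p.adj_getVert_succ (by omega)).symm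

theorem IsChordal.false_of_apex_inducedPath (hG : IsChordal G) {n : ℕ} (hn : 2 ≤ n)
    {c : ℕ → V} {v : V} (hinj : ∀ i ≤ n, ∀ j ≤ n, c i = c j → i = j) (hv : ∀ i ≤ n, c i ≠ v)
    (hpath : ∀ i ≤ n, ∀ j ≤ n, G.Adj (c i) (c j) ↔ i + 1 = j ∨ j + 1 = i)
    (hapex : ∀ i ≤ n, G.Adj v (c i) ↔ i = 0 ∨ i = n) : False := by
  have hsucc : ∀ a < n + 2, ∀ b < n + 2,
      (a + 1) % (n + 2) = b ↔ a + 1 = b ∨ (a = n + 1 ∧ b = 0) := by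
    intro a ha b hb
    rcases (show a + 1 < n + 2 ∨ a + 1 = n + 2 by omega) with h | h
    · rw [Nat.mod_eq_of_lt h]; omega
    · rw [h, Nat.mod_self]; omega
  -- the induced cycle `c 0, …, c n, v`
  refine hG (n + 2) (by omega) (fun i => if (i : ℕ) ≤ n then c i else v) ?_ fun i j => ?_
  · intro i j hij
    dsimp only at hij
    split_ifs at hij with hi hj hj
    · exact Fin.ext (hinj _ hi _ hj hij)
    · exact absurd hij (hv _ hi)
    · exact absurd hij.symm (hv _ hj)
    · exact Fin.ext (by omega)
  · rw [hsucc _ i.isLt _ j.isLt, hsucc _ j.isLt _ i.isLt]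
    split_ifs with hi hj hj
    · rw [hpath _ hi _ hj]; omega
    · rw [G.adj_comm, hapex _ hi]; omega
    · rw [hapex _ hj]; omega
    · simp only [SimpleGraph.irrefl, false_iff]; omega

theorem IsChordal.not_reachable_induce (hG : IsChordal G) {v x y : V}
    (hx : G.Adj v x) (hy : G.Adj v y) (hxy : x ≠ y) (hnadj : ¬G.Adj x y) {T : Set V}
    (hT : ∀ w ∈ T, w = x ∨ w = y ∨ (w ≠ v ∧ ¬G.Adj v w)) (hxT : x ∈ T) (hyT : y ∈ T) :
    ¬(G.induce T).Reachable ⟨x, hxT⟩ ⟨y, hyT⟩ := by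
  intro hr
  obtain ⟨p, hp⟩ := hr.exists_walk_length_eq_dist
  set n := p.length
  set c : ℕ → V := fun i => p.getVert i
  have hc0 : c 0 = x := by simp [c]
  have hcn : c n = y := by simp [c, n]
  have hinj : ∀ i ≤ n, ∀ j ≤ n, c i = c j → i = j := fun i hi j hj h =>
    (p.isPath_of_length_eq_dist hp).getVert_injOn hi hj (Subtype.ext h)
  have hn : 2 ≤ n := by
    have h0 : n ≠ 0 := fun h => hxy (by rw [← hc0, ← hcn, h])
    have h1 : n ≠ 1 := fun h => hnadj (by
      rw [← hc0, ← hcn, h]; exact p.adj_getVert_succ (i := 0) (by omega))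
    omega
  have hmid : ∀ i, 0 < i → i < n → c i ≠ v ∧ ¬G.Adj v (c i) := by
    intro i hi hin
    rcases hT _ (p.getVert i).2 with h | h | h
    · exact absurd (hinj _ hin.le _ (Nat.zero_le n) (h.trans hc0.symm)) hi.ne'
    · exact absurd (hinj _ hin.le _ le_rfl (h.trans hcn.symm)) hin.ne
    · exact h
  refine hG.false_of_apex_inducedPath (v := v) hn hinj (fun i hi => ?_)
    (fun i hi j hj => p.adj_getVert_iff_of_length_eq_dist hp hi hj) (fun i hi => ?_)
  · rcases (show i = 0 ∨ i = n ∨ (0 < i ∧ i < n) by omega) with rfl | rfl | h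
    · exact hc0 ▸ hx.ne.symm
    · exact hcn ▸ hy.ne.symm
    · exact (hmid i h.1 h.2).1
  · constructor
    · intro hadj
      by_contra h
      exact (hmid i (by omega) (by omega)).2 hadj
    · rintro (rfl | rfl)
      · exact hc0 ▸ hx
      · exact hcn ▸ hy

theorem SimpleGraph.exists_mem_reachable_induce_of_isClique_union {C : ℕ → Set V} {T : Set V}
    {t u : ℕ} (htu : t ≤ u) (hC : ∀ j, t ≤ j → j < u → G.IsClique (C j ∪ C (j + 1)))
    (hT : ∀ j, t < j → j ≤ u → ∃ w ∈ C j, w ∈ T) {x : V} (hx : x ∈ C t) (hxT : x ∈ T) :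
    ∃ w ∈ C u, ∃ hw : w ∈ T, (G.induce T).Reachable ⟨x, hxT⟩ ⟨w, hw⟩ := by
  induction u, htu using Nat.le_induction with
  | base => exact ⟨x, hx, hxT, .rfl⟩
  | succ u htu ih =>
    obtain ⟨w, hw, hwT, hr⟩ :=
      ih (fun j hj hju => hC j hj (by omega)) (fun j hj hju => hT j hj (by omega))
    by_cases hw' : w ∈ C (u + 1)
    · exact ⟨w, hw', hwT, hr⟩
    obtain ⟨w', hw'C, hw'T⟩ := hT (u + 1) (by omega) le_rfl
    have hadj : G.Adj w w' :=
      hC u htu (by omega) (Or.inl hw) (Or.inr hw'C) (by rintro rfl; exact hw' hw'C)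
    exact ⟨w', hw'C, hw'T, hr.trans (Adj.reachable (G := G.induce T) hadj)⟩

theorem IsChordal.isClique_union_of_excursion (hG : IsChordal G) {C : ℕ → Set V} {v : V}
    {t u : ℕ} (htu : t < u) (hC : ∀ j, t ≤ j → j < u → G.IsClique (C j ∪ C (j + 1)))
    (hCt : C t ⊆ G.neighborSet v) (hCu : C u ⊆ G.neighborSet v)
    (hout : ∀ j, t < j → j < u → ∃ w ∈ C j, w ≠ v ∧ ¬G.Adj v w) :
    G.IsClique (C t ∪ C u) := by
  have hCt' : G.IsClique (C t) := (hC t le_rfl htu).subset Set.subset_union_left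
  have hCu' : G.IsClique (C u) := by
    have := hC (u - 1) (by omega) (by omega)
    rw [Nat.sub_add_cancel (by omega)] at this
    exact this.subset Set.subset_union_right
  refine Set.pairwise_union.2 ⟨hCt', hCu', fun x hx y hy hxy => ?_⟩
  suffices G.Adj x y from ⟨this, this.symm⟩
  by_contra hnadj
  -- a walk from `x` to `y` through non-neighbours of `v`, carried along the cliques
  let T : Set V := {w | w = x ∨ w = y ∨ (w ≠ v ∧ ¬G.Adj v w)}
  have hT : ∀ j, t < j → j ≤ u → ∃ w ∈ C j, w ∈ T := by
    intro j hj hju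
    rcases hju.lt_or_eq with hju | rfl
    · obtain ⟨w, hw, hwT⟩ := hout j hj hju
      exact ⟨w, hw, Or.inr (Or.inr hwT)⟩
    · exact ⟨y, hy, Or.inr (Or.inl rfl)⟩
  obtain ⟨w, hw, hwT, hr⟩ :=
    exists_mem_reachable_induce_of_isClique_union htu.le hC hT hx (Or.inl rfl)
  rcases hwT with rfl | rfl | ⟨-, hvw⟩
  · exact hnadj (hCu' hw hy hxy)
  · exact hG.not_reachable_induce (hCt hx) (hCu hy) hxy hnadj (fun _ h => h) _ _ hr
  · exact hvw (hCu hw)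

end Chordal

namespace TARStep

variable {A B : Finset V}

theorem symm (h : TARStep A B) : TARStep B A := by
  rcases h with ⟨w, hw, rfl⟩ | ⟨w, hw, rfl⟩
  · exact .inr ⟨w, mem_insert_self w A, (erase_insert hw).symm⟩
  · exact .inl ⟨w, notMem_erase w A, (insert_erase hw).symm⟩

theorem subset_or_subset (h : TARStep A B) : A ⊆ B ∨ B ⊆ A := by
  rcases h with ⟨w, -, rfl⟩ | ⟨w, -, rfl⟩
  · exact .inl (subset_insert w A)
  · exact .inr (erase_subset w A)

theorem eq_insert_of_notMem_of_mem (h : TARStep A B) {w : V} (hA : w ∉ A) (hB : w ∈ B) :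
    B = insert w A := by
  rcases h with ⟨z, -, rfl⟩ | ⟨z, -, rfl⟩
  · obtain rfl : w = z := by simpa [hA] using hB
    rfl
  · exact absurd (mem_of_mem_erase hB) hA

theorem eq_erase_of_mem_of_notMem (h : TARStep A B) {w : V} (hA : w ∈ A) (hB : w ∉ B) :
    B = A.erase w := by
  rw [h.symm.eq_insert_of_notMem_of_mem hB hA, erase_insert hB]

theorem card_symmDiff (h : TARStep A B) : #(A ∆ B) = 1 := by
  rcases h with ⟨w, hw, rfl⟩ | ⟨w, hw, rfl⟩
  · rw [symmDiff_of_le (subset_insert w A), insert_sdiff_cancel hw, card_singleton]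
  · rw [symmDiff_comm, symmDiff_of_le (erase_subset w A), sdiff_erase_self hw, card_singleton]

theorem insert (h : TARStep A B) {v : V} (hA : v ∉ A) (hB : v ∉ B) :
    TARStep (insert v A) (insert v B) := by
  rcases h with ⟨w, hw, rfl⟩ | ⟨w, hw, rfl⟩
  · have hwv : w ≠ v := by rintro rfl; exact hB (mem_insert_self w A)
    exact .inl ⟨w, by simp [hwv, hw], insert_comm v w A⟩
  · have hwv : w ≠ v := by rintro rfl; exact hA hw
    exact .inr ⟨w, mem_insert_of_mem hw, (erase_insert_of_ne hwv.symm).symm⟩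

theorem isClique_union {G : SimpleGraph V} (h : TARStep A B) (hA : G.IsClique (A : Set V))
    (hB : G.IsClique (B : Set V)) : G.IsClique ((A : Set V) ∪ B) := by
  rcases h.subset_or_subset with h | h
  · rwa [Set.union_eq_right.2 (coe_subset.2 h)]
  · rwa [Set.union_eq_left.2 (coe_subset.2 h)]

end TARStep

def TARReach (G : SimpleGraph V) (k m : ℕ) (A B : Finset V) : Prop :=
  ∃ g, TARSeq G k m g ∧ g 0 = A ∧ g m = B

def IsShortestTARSeq (G : SimpleGraph V) (k ℓ : ℕ) (f : ℕ → Finset V) : Prop :=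
  ∀ ℓ' g, TARSeq G k ℓ' g → g 0 = f 0 → g ℓ' = f ℓ → ℓ ≤ ℓ'

variable {G : SimpleGraph V} {k ℓ : ℕ} {f : ℕ → Finset V}

namespace TARSeq

theorem shift (hf : TARSeq G k ℓ f) {s s' : ℕ} (hss' : s ≤ s') (hs' : s' ≤ ℓ) :
    TARSeq G k (s' - s) (fun i => f (s + i)) :=
  ⟨fun i hi => hf.1 _ (by omega), fun i hi => by
    simpa only [Nat.add_assoc] using hf.2 (s + i) (by omega)⟩

theorem tarReach (hf : TARSeq G k ℓ f) {s s' : ℕ} (hss' : s ≤ s') (hs' : s' ≤ ℓ) :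
    TARReach G k (s' - s) (f s) (f s') :=
  ⟨_, hf.shift hss' hs', by simp, by simp only [Nat.add_sub_cancel' hss']⟩

theorem insert (hf : TARSeq G k ℓ f) {v : V} (hv : ∀ i ≤ ℓ, v ∉ f i)
    (hadj : ∀ i ≤ ℓ, (f i : Set V) ⊆ G.neighborSet v) :
    TARSeq G k ℓ (fun i => insert v (f i)) := by
  refine ⟨fun i hi => ⟨?_, ?_⟩, fun i hi => (hf.2 i hi).insert (hv i hi.le) (hv (i + 1) hi)⟩
  · rw [coe_insert]
    exact (hf.1 i hi).1.insert fun z hz _ => hadj i hi hz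
  · exact (hf.1 i hi).2.trans (card_le_card (subset_insert v (f i)))

theorem card_symmDiff_le (hf : TARSeq G k ℓ f) : #(f 0 ∆ f ℓ) ≤ ℓ := by
  suffices h : ∀ i ≤ ℓ, #(f 0 ∆ f i) ≤ i from h ℓ le_rfl
  intro i hi
  induction i with
  | zero => simp
  | succ i ih =>
    calc #(f 0 ∆ f (i + 1))
        ≤ #(f 0 ∆ f i ∪ f i ∆ f (i + 1)) := card_le_card (symmDiff_triangle _ _ _)
      _ ≤ #(f 0 ∆ f i) + #(f i ∆ f (i + 1)) := card_union_le _ _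
      _ ≤ i + 1 := by rw [(hf.2 i hi).card_symmDiff]; have := ih (by omega); omega

end TARSeq

namespace TARReach

variable {m n : ℕ} {A B C : Finset V}

theorem refl (hA : G.IsClique (A : Set V)) (hk : k ≤ #A) : TARReach G k 0 A A :=
  ⟨fun _ => A, ⟨fun _ _ => ⟨hA, hk⟩, fun _ h => absurd h (Nat.not_lt_zero _)⟩, rfl, rfl⟩

theorem of_tarStep (h : TARStep A B) (hA : G.IsClique (A : Set V)) (hkA : k ≤ #A)
    (hB : G.IsClique (B : Set V)) (hkB : k ≤ #B) : TARReach G k 1 A B := by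
  refine ⟨fun i => if i = 0 then A else B, ⟨fun i _ => ?_, fun i hi => ?_⟩, rfl, rfl⟩
  · dsimp only
    split_ifs
    exacts [⟨hA, hkA⟩, ⟨hB, hkB⟩]
  · obtain rfl : i = 0 := by omega
    simpa using h

theorem trans (hAB : TARReach G k m A B) (hBC : TARReach G k n B C) :
    TARReach G k (m + n) A C := by
  obtain ⟨g, hg, rfl, hgm⟩ := hAB
  obtain ⟨h, hh, hh0, rfl⟩ := hBC
  have hright : ∀ i, m ≤ i → (if i ≤ m then g i else h (i - m)) = h (i - m) := by
    intro i hi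
    split_ifs with him
    · obtain rfl : i = m := le_antisymm him hi
      rw [hgm, Nat.sub_self, hh0]
    · rfl
  refine ⟨fun i => if i ≤ m then g i else h (i - m), ⟨fun i hi => ?_, fun i hi => ?_⟩,
    if_pos (Nat.zero_le m),
    (hright _ (Nat.le_add_right m n)).trans (by rw [Nat.add_sub_cancel_left])⟩
  · rcases le_total i m with him | him
    · simpa only [if_pos him] using hg.1 i him
    · simpa only [hright i him] using hh.1 (i - m) (by omega)
  · rcases lt_or_ge i m with him | him
    · simpa only [if_pos him.le, if_pos (Nat.succ_le_of_lt him)] using hg.2 i him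
    · dsimp only
      rw [hright i him, hright (i + 1) (by omega), Nat.sub_add_comm him]
      exact hh.2 (i - m) (by omega)

theorem symm (h : TARReach G k m A B) : TARReach G k m B A := by
  obtain ⟨g, hg, rfl, rfl⟩ := h
  refine ⟨fun i => g (m - i), ⟨fun i hi => hg.1 _ (Nat.sub_le m i), fun i hi => ?_⟩,
    by simp, by simp⟩
  have := (hg.2 (m - (i + 1)) (by omega)).symm
  rwa [show m - (i + 1) + 1 = m - i by omega] at this

theorem card_symmDiff_le (h : TARReach G k m A B) : #(A ∆ B) ≤ m := by
  obtain ⟨g, hg, rfl, rfl⟩ := h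
  exact hg.card_symmDiff_le

theorem of_subset (hAB : A ⊆ B) (hB : G.IsClique (B : Set V)) (hk : k ≤ #A) :
    TARReach G k #(B \ A) A B := by
  induction hn : #(B \ A) generalizing B with
  | zero =>
    obtain rfl : B = A := (sdiff_eq_empty_iff_subset.1 (card_eq_zero.1 hn)).antisymm hAB
    exact refl hB hk
  | succ n ih =>
    obtain ⟨w, hw⟩ := card_pos.1 (by omega : 0 < #(B \ A))
    rw [mem_sdiff] at hw
    have hAB' : A ⊆ B.erase w := fun z hz =>
      mem_erase_of_ne_of_mem (by rintro rfl; exact hw.2 hz) (hAB hz)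
    have hB' : G.IsClique (B.erase w : Set V) := hB.subset (coe_subset.2 (erase_subset w B))
    have hstep : TARStep (B.erase w) B := .inl ⟨w, notMem_erase w B, (insert_erase hw.1).symm⟩
    refine (ih hAB' hB' ?_).trans (of_tarStep hstep hB' (hk.trans (card_le_card hAB')) hB
      (hk.trans (card_le_card hAB)))
    rw [erase_sdiff_comm, card_erase_of_mem (mem_sdiff.2 hw), hn, Nat.add_sub_cancel]

theorem of_isClique_union (hAB : G.IsClique (↑(A ∪ B) : Set V)) (hA : k ≤ #A) (hB : k ≤ #B) :
    TARReach G k #(A ∆ B) A B := by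
  have h := (of_subset subset_union_left hAB hA).trans (of_subset subset_union_right hAB hB).symm
  rwa [union_sdiff_left, union_sdiff_right, add_comm, ← card_union_of_disjoint disjoint_sdiff_sdiff,
    ← Finset.symmDiff_def] at h

end TARReach

theorem IsShortestTARSeq.sub_le (hs : IsShortestTARSeq G k ℓ f) (hf : TARSeq G k ℓ f)
    {s s' m : ℕ} (hss' : s ≤ s') (hs' : s' ≤ ℓ) (h : TARReach G k m (f s) (f s')) :
    s' - s ≤ m := by
  obtain ⟨g, hg, hg0, hgℓ⟩ :=
    ((hf.tarReach (Nat.zero_le s) (hss'.trans hs')).trans h).trans (hf.tarReach hs' le_rfl)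
  have := hs _ g hg hg0 hgℓ
  omega

theorem exists_gap_around {P : ℕ → Prop} {s j s' : ℕ} (hs : P s) (hs' : P s') (hsj : s ≤ j)
    (hjs' : j ≤ s') (hj : ¬P j) :
    ∃ t u, s ≤ t ∧ t < j ∧ j < u ∧ u ≤ s' ∧ P t ∧ P u ∧ ∀ i, t < i → i < u → ¬P i := by
  classical
  have hex : ∃ u, j ≤ u ∧ P u := ⟨s', hjs', hs'⟩
  have ht : P (Nat.findGreatest P j) := Nat.findGreatest_spec hsj hs
  obtain ⟨hju, hu⟩ := Nat.find_spec hex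
  refine ⟨_, _, Nat.le_findGreatest hsj hs, ?_, ?_, Nat.find_min' hex ⟨hjs', hs'⟩, ht, hu,
    fun i hti hiu hi => ?_⟩
  · exact (Nat.findGreatest_le j).lt_of_ne fun h => hj (h ▸ ht)
  · exact hju.lt_of_ne fun h => hj (h ▸ hu)
  · rcases le_or_gt i j with hij | hij
    · exact Nat.findGreatest_is_greatest hti hij hi
    · exact Nat.find_min hex hiu ⟨hij.le, hi⟩

theorem IsChordal.false_of_excursion (hG : IsChordal G) (hf : TARSeq G k ℓ f)
    (hs : IsShortestTARSeq G k ℓ f) {v : V} {t u : ℕ} (htu : t + 1 < u) (hu : u ≤ ℓ)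
    (ht : (f t : Set V) ⊆ G.neighborSet v) (hu' : (f u : Set V) ⊆ G.neighborSet v)
    (hout : ∀ i, t < i → i < u → ∃ w ∈ f i, w ≠ v ∧ ¬G.Adj v w) : False := by
  have hclique : G.IsClique ((f t : Set V) ∪ f u) :=
    hG.isClique_union_of_excursion (C := fun i => (f i : Set V)) (by omega)
      (fun j _ hj => (hf.2 j (by omega)).isClique_union (hf.1 j (by omega)).1
        (hf.1 (j + 1) (by omega)).1) ht hu' hout
  have hlong : u - t ≤ #(f t ∆ f u) := hs.sub_le hf (by omega) hu
    (TARReach.of_isClique_union (by rwa [coe_union]) (hf.1 t (by omega)).2 (hf.1 u hu).2)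
  -- the first step adds a non-neighbour `w` of `v`, which has to leave again before `u`
  obtain ⟨w, hw, -, hvw⟩ := hout (t + 1) (by omega) htu
  have hwt : w ∉ f t := fun h => hvw (ht h)
  have hwu : w ∉ f u := fun h => hvw (hu' h)
  have hstep : f (t + 1) ∆ f u = insert w (f t ∆ f u) := by
    rw [(hf.2 t (by omega)).eq_insert_of_notMem_of_mem hwt hw]
    ext z
    by_cases hz : z = w
    · subst hz; simp [mem_symmDiff, hwu]
    · simp [mem_symmDiff, hz]
  have hshort := (hf.tarReach (s := t + 1) (by omega) hu).card_symmDiff_le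
  rw [hstep, card_insert_of_notMem (by simp [mem_symmDiff, hwt, hwu])] at hshort
  omega

theorem IsChordal.false_of_reinsertion (hG : IsChordal G) (hf : TARSeq G k ℓ f)
    (hs : IsShortestTARSeq G k ℓ f) {v : V} {a b : ℕ} (hab : a < b) (hb : b < ℓ)
    (ha : v ∈ f a) (hb' : v ∈ f (b + 1)) (hgap : ∀ i, a < i → i ≤ b → v ∉ f i) : False := by
  have hfa : f (a + 1) = (f a).erase v :=
    (hf.2 a (by omega)).eq_erase_of_mem_of_notMem ha (hgap _ (by omega) (by omega))
  have hfb : f (b + 1) = insert v (f b) :=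
    (hf.2 b hb).eq_insert_of_notMem_of_mem (hgap b hab le_rfl) hb'
  have hfa' : (f (a + 1) : Set V) ⊆ G.neighborSet v := fun z hz => by
    rw [hfa, mem_coe, mem_erase] at hz
    exact (hf.1 a (by omega)).1 ha hz.2 hz.1.symm
  have hfb' : (f b : Set V) ⊆ G.neighborSet v := fun z hz =>
    (hf.1 (b + 1) hb).1 hb' (hfb ▸ mem_insert_of_mem hz)
      (by rintro rfl; exact hgap b hab le_rfl hz)
  by_cases hin : ∀ i, a < i → i ≤ b → (f i : Set V) ⊆ G.neighborSet v
  · -- putting `v` back into every clique of the gap saves two steps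
    have h := (hf.shift (s := a + 1) (by omega) hb.le).insert (v := v)
      (fun i hi => hgap _ (by omega) (by omega)) (fun i hi => hin _ (by omega) (by omega))
    have := hs.sub_le hf (s := a) (s' := b + 1) (by omega) hb
      ⟨_, h, by simp [hfa, insert_erase ha], by simp [Nat.add_sub_cancel' hab, hfb]⟩
    omega
  · push Not at hin
    obtain ⟨j, haj, hjb, hj⟩ := hin
    obtain ⟨t, u, hat, htj, hju, hub, ht, hu, hmid⟩ :=
      exists_gap_around (P := fun i => (f i : Set V) ⊆ G.neighborSet v) hfa' hfb' haj hjb hj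
    refine hG.false_of_excursion hf hs (by omega) (by omega) ht hu fun i hti hiu => ?_
    obtain ⟨w, hw, hvw⟩ := Set.not_subset.1 (hmid i hti hiu)
    exact ⟨w, hw, by rintro rfl; exact hgap i (by omega) (by omega) hw, hvw⟩

theorem stmt15_general (G : SimpleGraph V) (hchordal : IsChordal G)
    (k ℓ : ℕ) (f : ℕ → Finset V)
    (hf : TARSeq G k ℓ f)
    (hshort : ∀ (ℓ' : ℕ) (g : ℕ → Finset V),
      TARSeq G k ℓ' g → g 0 = f 0 → g ℓ' = f ℓ → ℓ ≤ ℓ')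
    (v : V) (p q : ℕ) (hq : q ≤ ℓ)
    (hvp : v ∈ f p) (hvq : v ∈ f q) :
    ∀ i, p ≤ i → i ≤ q → v ∈ f i := by
  intro i hpi hiq
  by_contra hvi
  obtain ⟨a, b, -, hai, hib, hbq, ha, hb, hgap⟩ :=
    exists_gap_around (P := fun j => v ∈ f j) hvp hvq hpi hiq hvi
  obtain ⟨b, rfl⟩ : ∃ c, b = c + 1 := ⟨b - 1, by omega⟩
  exact hchordal.false_of_reinsertion hf hshort (by omega) (by omega) ha hb
    fun j hj hjb => hgap j hj (by omega)

theorem stmt15 (G : SimpleGraph V) (hchordal : IsChordal G)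
    (k ℓ : ℕ) (f : ℕ → Finset V)
    (hf : TARSeq G k ℓ f)
    (hshort : ∀ (ℓ' : ℕ) (g : ℕ → Finset V),
      TARSeq G k ℓ' g → g 0 = f 0 → g ℓ' = f ℓ → ℓ ≤ ℓ')
    (v : V) (p q : ℕ) (hpq : p < q) (hq : q ≤ ℓ)
    (hvp : v ∈ f p) (hvq : v ∈ f q) :
    ∀ i, p ≤ i → i ≤ q → v ∈ f i :=
  stmt15_general G hchordal k ℓ f hf hshort v p q hq hvp hvq
end

section
/- Let G be a simple graph and let C_s, C_t be cliques of G that are both contained in a common maximal clique M. Then for every k ≤ min(|C_s|, |C_t|), there exists a TAR(k)-sequence from C_s to C_t, and its minimum length is exactly |C_s △ C_t|. -/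
variable {V : Type*} [DecidableEq V]

/-- A maximal clique of `G`. -/
def IsMaximalClique (G : SimpleGraph V) (M : Finset V) : Prop :=
  G.IsClique (M : Set V) ∧
    ∀ D : Finset V, G.IsClique (D : Set V) → M ⊆ D → M = D

/-!
Every TAR step changes the symmetric difference with the target by exactly one vertex, so by the
triangle inequality for `∆` no TAR-sequence from `Cs` to `Ct` is shorter than `|Cs ∆ Ct|`.
Conversely, inside the clique `M` every subset is a clique, so one may first add the vertices of
`Ct \ Cs` one at a time and then delete those of `Cs \ Ct`: sizes never drop below
`min |Cs| |Ct|`, and each step shrinks the symmetric difference by one.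
-/

open Finset
open scoped symmDiff

namespace Finset

variable {A B : Finset V} {v : V}

lemma symmDiff_insert_self_of_notMem (hv : v ∉ A) :
    A ∆ insert v A = {v} := by
  ext x
  by_cases hx : x = v <;> simp_all [mem_symmDiff]

lemma symmDiff_erase_self_of_mem (hv : v ∈ A) :
    A ∆ A.erase v = {v} := by
  ext x
  by_cases hx : x = v <;> simp_all [mem_symmDiff]

lemma insert_symmDiff_of_mem (hv : v ∈ B) :
    insert v A ∆ B = (A ∆ B).erase v := by
  ext x
  by_cases hx : x = v <;> simp_all [mem_symmDiff]

lemma erase_symmDiff_of_notMem (hv : v ∉ B) :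
    A.erase v ∆ B = (A ∆ B).erase v := by
  ext x
  by_cases hx : x = v <;> simp_all [mem_symmDiff]

end Finset

lemma TARStep.card_symmDiff_s18 {A A' : Finset V} (h : TARStep A A') : #(A ∆ A') = 1 := by
  obtain ⟨v, hv, rfl⟩ | ⟨v, hv, rfl⟩ := h
  · rw [symmDiff_insert_self_of_notMem hv, card_singleton]
  · rw [symmDiff_erase_self_of_mem hv, card_singleton]

lemma card_symmDiff_le_of_tarStep {f : ℕ → Finset V} {ℓ : ℕ}
    (h : ∀ i < ℓ, TARStep (f i) (f (i + 1))) : #(f 0 ∆ f ℓ) ≤ ℓ := by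
  induction ℓ with
  | zero => simp
  | succ ℓ ih =>
    calc #(f 0 ∆ f (ℓ + 1))
        ≤ #(f 0 ∆ f ℓ ∪ f ℓ ∆ f (ℓ + 1)) := card_le_card (symmDiff_triangle _ _ _)
      _ ≤ #(f 0 ∆ f ℓ) + #(f ℓ ∆ f (ℓ + 1)) := card_union_le _ _
      _ ≤ ℓ + 1 := by
        rw [(h ℓ (by omega)).card_symmDiff_s18]
        exact Nat.add_le_add_right (ih fun i hi => h i (by omega)) 1

lemma exists_tarStep_toward {A B : Finset V} (hAB : A ≠ B) :
    ∃ A', TARStep A A' ∧ A' ⊆ A ∪ B ∧ min #A #B ≤ #A' ∧ #(A' ∆ B) + 1 = #(A ∆ B) := by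
  by_cases hBA : B ⊆ A
  · obtain ⟨v, hvA, hvB⟩ := exists_of_ssubset (ssubset_of_subset_of_ne hBA hAB.symm)
    refine ⟨A.erase v, Or.inr ⟨v, hvA, rfl⟩, (erase_subset v A).trans subset_union_left,
      (min_le_right _ _).trans (card_le_card fun x hx => mem_erase.2 ⟨?_, hBA hx⟩), ?_⟩
    · rintro rfl
      exact hvB hx
    · rw [erase_symmDiff_of_notMem hvB, card_erase_add_one (by simp [mem_symmDiff, hvA, hvB])]
  · obtain ⟨v, hvB, hvA⟩ := not_subset.1 hBA
    refine ⟨insert v A, Or.inl ⟨v, hvA, rfl⟩, insert_subset (mem_union_right A hvB)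
      subset_union_left, (min_le_left _ _).trans (card_le_card (subset_insert v A)), ?_⟩
    rw [insert_symmDiff_of_mem hvB, card_erase_add_one (by simp [mem_symmDiff, hvA, hvB])]

lemma TARSeq.cons {G : SimpleGraph V} {k ℓ : ℕ} {f : ℕ → Finset V} {A : Finset V}
    (hf : TARSeq G k ℓ f) (hA : G.IsClique (A : Set V)) (hkA : k ≤ #A) (hstep : TARStep A (f 0)) :
    TARSeq G k (ℓ + 1) (fun | 0 => A | i + 1 => f i) := by
  refine ⟨fun i hi => ?_, fun i hi => ?_⟩
  · cases i with
    | zero => exact ⟨hA, hkA⟩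
    | succ i => exact hf.1 i (by omega)
  · cases i with
    | zero => exact hstep
    | succ i => exact hf.2 i (by omega)

lemma exists_tarSeq_of_subset_clique {G : SimpleGraph V} {M B : Finset V} {k : ℕ}
    (hM : G.IsClique (M : Set V)) (hB : B ⊆ M) (hkB : k ≤ #B) (A : Finset V) (hA : A ⊆ M)
    (hkA : k ≤ #A) : ∃ f, TARSeq G k #(A ∆ B) f ∧ f 0 = A ∧ f #(A ∆ B) = B := by
  induction h : #(A ∆ B) generalizing A with
  | zero =>
    obtain rfl : A = B := symmDiff_eq_empty.1 (card_eq_zero.1 h)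
    exact ⟨fun _ => A, ⟨fun _ _ => ⟨hM.subset (coe_subset.2 hA), hkA⟩, by simp⟩, rfl, rfl⟩
  | succ n ih =>
    have hAB : A ≠ B := by
      rintro rfl
      simp at h
    obtain ⟨A', hstep, hA'AB, hkA', hcard⟩ := exists_tarStep_toward hAB
    obtain ⟨f, hf, hf0, hfn⟩ :=
      ih A' (hA'AB.trans (union_subset hA hB)) ((le_min hkA hkB).trans hkA') (by omega)
    exact ⟨_, hf.cons (hM.subset (coe_subset.2 hA)) hkA (hf0 ▸ hstep), rfl, hfn⟩

theorem stmt18 (G : SimpleGraph V) (Cs Ct : Finset V) (M : Finset V)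
    (hM : IsMaximalClique G M) (hs : Cs ⊆ M) (ht : Ct ⊆ M)
    (k : ℕ) (hk : k ≤ min Cs.card Ct.card) :
    IsLeast {ℓ | ∃ f : ℕ → Finset V, TARSeq G k ℓ f ∧ f 0 = Cs ∧ f ℓ = Ct}
      ((Cs \ Ct ∪ Ct \ Cs).card) := by
  rw [← Finset.symmDiff_def]
  obtain ⟨hks, hkt⟩ := le_min_iff.1 hk
  refine ⟨exists_tarSeq_of_subset_clique hM.1 ht hkt Cs hs hks, ?_⟩
  rintro ℓ ⟨f, hf, rfl, rfl⟩
  exact card_symmDiff_le_of_tarStep hf.2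
end
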